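/- Let (G, v₀) be a multiplayer quantitative reachability game, Γ = 2·|Π|·|V|, and d = Γ + 3·|V|. If there exists a goal-optimal and dev-optimal secure equilibrium in the truncated game 𝒯^d, then there exists a finite-memory secure equilibrium in (G, v₀) with the same cost profile. -/

import Mathlib

/-!
Let `ρ` be the outcome of `σ` and `D` the dev-optimality bound. Goal-optimality bounds the finite
costs of `ρ` by `Γ`, so some vertex repeats on `ρ` between times `D` and `D + |V|`; looping on that
cycle gives a lasso play `w` with the same costs. It is the outcome of the following finite-memory
profile: everyone follows `w`; after a deviation at a time `q ≤ D` the players keep playing `σ` up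
to time `Γ + 2|V|`; after a later deviation, or past that time, the coalition keeps the play
outside the deviator's winning region in the zero-sum reachability game for his goal.

A profitable early deviation is mirrored up to time `D` by a deviation in `𝒯^d`, which
dev-optimality forbids, unless the deviator reaches a goal that `w` misses. A late deviation
changes no finite cost of `w`, so it can only be profitable in that way too. But if the truncated
outcome of `σ` misses the deviator's goal, security of `σ` in `𝒯^d` shows that neither `ρ` nor
the deviation, as long as the others follow `σ`, enters his winning region: from there he would
reach his goal within `|V|` more steps of `𝒯^d`. The punishment then keeps him out forever.
-/

open scoped Classical ENat

/-- A multiplayer quantitative reachability game: a finite directed graph whose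
vertices are partitioned among the players (via `owner`), every vertex has an
outgoing edge, and each player `i` has a nonempty goal set `F i`. -/
structure QRGame (ι V : Type) where
  owner : V → ι
  E : V → V → Prop
  total : ∀ v, ∃ w, E v w
  F : ι → Set V
  F_ne : ∀ i, (F i).Nonempty

namespace QRGame

variable {ι V : Type}

/-- Histories are encoded as *reversed* nonempty lists: the head is the current
vertex, the last element is the initial vertex `v₀`, and consecutive elements
are joined by edges of the graph. -/
def IsHist (G : QRGame ι V) (v₀ : V) : List V → Prop
  | [] => False
  | [v] => v = v₀
  | v :: w :: t => G.E w v ∧ IsHist G v₀ (w :: t)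

/-- The current (i.e. most recent) vertex of a history. -/
def cur (v₀ : V) (h : List V) : V := h.headD v₀

/-- `σ` is a valid strategy of player `i`: on every history whose current
vertex belongs to player `i`, it chooses a successor along an edge. -/
def IsStrat (G : QRGame ι V) (v₀ : V) (i : ι) (σ : List V → V) : Prop :=
  ∀ h : List V, G.IsHist v₀ h → G.owner (cur v₀ h) = i → G.E (cur v₀ h) (σ h)

/-- A strategy profile: one valid strategy for each player. -/
def IsProfile (G : QRGame ι V) (v₀ : V) (σ : ι → List V → V) : Prop :=
  ∀ i, G.IsStrat v₀ i (σ i)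

/-- The history reached after `n` further steps when all players follow the
profile `σ` from the history `h` on. -/
def histFrom (G : QRGame ι V) (v₀ : V) (σ : ι → List V → V) (h : List V) : ℕ → List V
  | 0 => h
  | n + 1 =>
      σ (G.owner (cur v₀ (histFrom G v₀ σ h n))) (histFrom G v₀ σ h n)
        :: histFrom G v₀ σ h n

/-- The full play (indexed from time `0`) whose prefix is the history `h` and
which is consistent with the profile `σ` after `h`. -/
def fullPlay (G : QRGame ι V) (v₀ : V) (σ : ι → List V → V) (h : List V) (t : ℕ) : V :=
  (G.histFrom v₀ σ h t).reverse.getD t v₀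

/-- The outcome `⟨(σ_i)⟩_{v₀}` of the profile `σ` from the initial vertex. -/
def outcome (G : QRGame ι V) (v₀ : V) (σ : ι → List V → V) : ℕ → V :=
  G.fullPlay v₀ σ [v₀]

/-- Cost of player `i` for a play `ρ`: the least `l` with `ρ l ∈ F i`,
and `⊤` (i.e. `+∞`) if there is no such `l`. -/
noncomputable def cost (G : QRGame ι V) (i : ι) (ρ : ℕ → V) : ℕ∞ :=
  ⨅ l ∈ {l : ℕ | ρ l ∈ G.F i}, (l : ℕ∞)

/-- Cost of player `i` for the finite prefix `ρ₀ … ρ_{m-1}` of a play. -/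
noncomputable def costLT (G : QRGame ι V) (i : ι) (ρ : ℕ → V) (m : ℕ) : ℕ∞ :=
  ⨅ l ∈ {l : ℕ | l < m ∧ ρ l ∈ G.F i}, (l : ℕ∞)

end QRGame

/-- The preference relation `≺_j` of player `j` on cost profiles:
`x ≺_j y` iff `x j > y j`, or `x j = y j`, every player's cost does not
decrease, and some player's cost strictly increases. -/
def Prec {ι : Type} (j : ι) (x y : ι → ℕ∞) : Prop :=
  y j < x j ∨ (x j = y j ∧ (∀ i, x i ≤ y i) ∧ ∃ i, x i < y i)

namespace QRGame

variable {ι V : Type} [DecidableEq ι]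

/-- `σ` restricted after the history `h` is a secure equilibrium in the subgame
`(G|_h, cur h)`: no player `j` has a `≺_j`-profitable deviation after `h`
(costs are computed on the whole play, including the prefix `h`). -/
def IsSecureAfter (G : QRGame ι V) (v₀ : V) (σ : ι → List V → V) (h : List V) : Prop :=
  ¬ ∃ (j : ι) (σ' : List V → V), G.IsStrat v₀ j σ' ∧
      Prec j (fun i => G.cost i (G.fullPlay v₀ σ h))
        (fun i => G.cost i (G.fullPlay v₀ (Function.update σ j σ') h))

/-- A secure equilibrium in `(G, v₀)`. -/
def IsSecure (G : QRGame ι V) (v₀ : V) (σ : ι → List V → V) : Prop :=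
  G.IsSecureAfter v₀ σ [v₀]

/-- A subgame perfect secure equilibrium: a secure equilibrium in every subgame. -/
def IsSPSE (G : QRGame ι V) (v₀ : V) (σ : ι → List V → V) : Prop :=
  ∀ h : List V, G.IsHist v₀ h → G.IsSecureAfter v₀ σ h

end QRGame

namespace QRGame

variable {ι V : Type}

/-- A strategy is finite-memory if the equivalence relation identifying two
histories `h`, `h'` whenever `σ` answers the same on `hδ` and `h'δ` for every
continuation `δ` has finite index; equivalently, the map sending a history to
the induced answering function has finite range.  (Histories are reversed
lists, so the continuation `δ` is appended in front.) -/
def FinMem (σ : List V → V) : Prop :=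
  (Set.range fun h : List V => fun δ : List V => σ (δ ++ h)).Finite

end QRGame

namespace QRGame

variable {ι V : Type}

/-- `σ` is a valid strategy of player `i` in the truncated game `𝒯^d` played on
the truncation of the unraveling of `G` to depth `d`: it chooses a successor
along an edge on every history of length (number of edges) `< d`, i.e. on every
history whose list of vertices has length `≤ d`. -/
def IsStratTrunc (G : QRGame ι V) (v₀ : V) (d : ℕ) (i : ι) (σ : List V → V) : Prop :=
  ∀ h : List V, G.IsHist v₀ h → h.length ≤ d →
    G.owner (cur v₀ h) = i → G.E (cur v₀ h) (σ h)

end QRGame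

namespace QRGame

variable {ι V : Type} [DecidableEq ι]

/-- `σ` restricted after the history `h` is a secure equilibrium in the subgame
of the truncated game `𝒯^d` after `h`: costs are computed on the prefix of the
play of length `d` (vertices of indices `0, …, d`). -/
def IsSecureTruncAfter (G : QRGame ι V) (v₀ : V) (d : ℕ)
    (σ : ι → List V → V) (h : List V) : Prop :=
  ¬ ∃ (j : ι) (σ' : List V → V), G.IsStratTrunc v₀ d j σ' ∧
      Prec j (fun i => G.costLT i (G.fullPlay v₀ σ h) (d + 1))
        (fun i => G.costLT i (G.fullPlay v₀ (Function.update σ j σ') h) (d + 1))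

/-- A secure equilibrium in the truncated game `𝒯^d`. -/
def IsSecureTrunc (G : QRGame ι V) (v₀ : V) (d : ℕ) (σ : ι → List V → V) : Prop :=
  G.IsSecureTruncAfter v₀ d σ [v₀]

/-- A subgame perfect secure equilibrium in the truncated game `𝒯^d`: a secure
equilibrium in the subgame after every history of the truncated tree. -/
def IsSPSETrunc (G : QRGame ι V) (v₀ : V) (d : ℕ) (σ : ι → List V → V) : Prop :=
  ∀ h : List V, G.IsHist v₀ h → h.length ≤ d + 1 → G.IsSecureTruncAfter v₀ d σ h

end QRGame

namespace QRGame

variable {ι V : Type} [Fintype V]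

/-- Goal-optimality (with bound `Γ`) in the truncated game `𝒯^d`: costs are
computed on the outcome of the truncated game, i.e. on the prefix of length `d`. -/
noncomputable def GoalOptTrunc (G : QRGame ι V) (v₀ : V) (d : ℕ)
    (σ : ι → List V → V) (Γ : ℕ) : Prop :=
  ∀ i, G.costLT i (G.outcome v₀ σ) (d + 1) ≠ ⊤ →
    G.costLT i (G.outcome v₀ σ) (d + 1) < (Γ : ℕ∞)

/-- The bound `D = max{Cost_i(ρ) : Cost_i(ρ) < +∞} + |V|` attached to the
outcome of a profile in the truncated game `𝒯^d`. -/
noncomputable def devBoundTrunc (G : QRGame ι V) (v₀ : V) (d : ℕ)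
    (σ : ι → List V → V) : ℕ :=
  (⨆ i ∈ {i : ι | G.costLT i (G.outcome v₀ σ) (d + 1) ≠ ⊤},
      G.costLT i (G.outcome v₀ σ) (d + 1)).toNat + Fintype.card V

variable [DecidableEq ι]

/-- Dev-optimality of a secure equilibrium in the truncated game `𝒯^d`. -/
noncomputable def DevOptTrunc (G : QRGame ι V) (v₀ : V) (d : ℕ)
    (σ : ι → List V → V) : Prop :=
  ∀ (j : ι) (σ' : List V → V), G.IsStratTrunc v₀ d j σ' →
    ¬ Prec j
        (fun i => G.costLT i (G.outcome v₀ σ) (G.devBoundTrunc v₀ d σ))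
        (fun i => G.costLT i (G.outcome v₀ (Function.update σ j σ'))
          (G.devBoundTrunc v₀ d σ))

end QRGame

namespace QRGame

/-- The cost, in a play prefix of length `m`, of a goal first reached at time `x`. -/
def truncCost (m : ℕ) (x : ℕ∞) : ℕ∞ := if x < m then x else ⊤

theorem truncCost_of_lt {m : ℕ} {x : ℕ∞} (h : x < m) : truncCost m x = x := if_pos h

theorem truncCost_of_le {m : ℕ} {x : ℕ∞} (h : (m : ℕ∞) ≤ x) : truncCost m x = ⊤ :=
  if_neg (not_lt.2 h)

theorem truncCost_truncCost {m n : ℕ} (hmn : m ≤ n) (x : ℕ∞) :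
    truncCost m (truncCost n x) = truncCost m x := by
  by_cases hxn : x < n
  · rw [truncCost_of_lt hxn]
  · rw [truncCost_of_le (not_lt.1 hxn), truncCost_of_le le_top,
      truncCost_of_le ((Nat.cast_le.2 hmn).trans (not_lt.1 hxn))]

theorem truncCost_mono (m : ℕ) : Monotone (truncCost m) := by
  intro x y hxy
  by_cases hy : y < m
  · rw [truncCost_of_lt hy, truncCost_of_lt (hxy.trans_lt hy)]
    exact hxy
  · rw [truncCost_of_le (not_lt.1 hy)]
    exact le_top

theorem truncCost_lt_truncCost {m : ℕ} {x y : ℕ∞} (hxy : x < y) (hx : x < m) :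
    truncCost m x < truncCost m y := by
  rw [truncCost_of_lt hx]
  by_cases hy : y < m
  · rwa [truncCost_of_lt hy]
  · rw [truncCost_of_le (not_lt.1 hy)]
    exact hx.trans (ENat.natCast_lt_top m)

theorem eq_of_truncCost_eq {m : ℕ} {x y : ℕ∞} (h : truncCost m x = y) (hy : y < m) : x = y := by
  by_cases hx : x < m
  · rwa [truncCost_of_lt hx] at h
  · rw [truncCost_of_le (not_lt.1 hx)] at h
    exact absurd (h ▸ hy) (not_lt.2 le_top)

end QRGame

namespace Prec

open QRGame

variable {ι : Type} {j : ι} {x y : ι → ℕ∞}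

theorem irrefl : ¬ Prec j x x := by
  rintro (h | ⟨-, -, i, hi⟩)
  · exact h.false
  · exact hi.false

theorem map_truncCost (h : Prec j x y) {m : ℕ} (hx : ∀ i, x i ≠ ⊤ → x i < m)
    (hj : x j ≠ ⊤ ∨ y j = ⊤) : Prec j (truncCost m ∘ x) (truncCost m ∘ y) := by
  rcases h with hlt | ⟨hjeq, hle, i, hi⟩
  · have hxj : x j ≠ ⊤ := hj.resolve_right (ne_top_of_lt hlt)
    exact Or.inl (truncCost_lt_truncCost hlt (hlt.trans (hx j hxj)))
  · refine Or.inr ⟨congrArg _ hjeq, fun k => truncCost_mono m (hle k), i, ?_⟩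
    exact truncCost_lt_truncCost hi (hx i (ne_top_of_lt hi))

theorem top_of_forall_eq (h : Prec j x y) (hxy : ∀ i, x i ≠ ⊤ → y i = x i) :
    x j = ⊤ ∧ y j ≠ ⊤ := by
  rcases h with hlt | ⟨-, -, i, hi⟩
  · have hxj : x j = ⊤ := by
      by_contra hxj
      exact hlt.ne (hxy j hxj)
    exact ⟨hxj, ne_top_of_lt hlt⟩
  · exact absurd (hxy i (ne_top_of_lt hi)) hi.ne'

end Prec

namespace QRGame

section Cost

variable {ι V : Type} (G : QRGame ι V) {i : ι} {ρ ρ' : ℕ → V}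

theorem cost_le_of_mem {l : ℕ} (h : ρ l ∈ G.F i) : G.cost i ρ ≤ l :=
  biInf_le (fun l : ℕ => (l : ℕ∞)) h

theorem costLT_le_of_mem {l m : ℕ} (hlm : l < m) (h : ρ l ∈ G.F i) : G.costLT i ρ m ≤ l :=
  biInf_le (fun l : ℕ => (l : ℕ∞)) ⟨hlm, h⟩

theorem exists_cost_eq (h : G.cost i ρ ≠ ⊤) : ∃ l, ρ l ∈ G.F i ∧ G.cost i ρ = l := by
  have hne : {l | ρ l ∈ G.F i}.Nonempty := by
    by_contra hne
    exact h (top_unique (le_iInf₂ fun l hl => (hne ⟨l, hl⟩).elim))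
  exact ⟨_, Nat.sInf_mem hne, (ENat.natCast_sInf hne).symm⟩

theorem costLT_eq_truncCost (m : ℕ) : G.costLT i ρ m = truncCost m (G.cost i ρ) := by
  by_cases hc : G.cost i ρ < m
  · rw [truncCost_of_lt hc]
    obtain ⟨l, hl, hcl⟩ := G.exists_cost_eq (ne_top_of_lt hc)
    refine le_antisymm ?_ (biInf_mono fun l hl => hl.2)
    rw [hcl] at hc ⊢
    exact G.costLT_le_of_mem (by exact_mod_cast hc) hl
  · rw [truncCost_of_le (not_lt.1 hc)]
    refine top_unique (le_iInf₂ fun l hl => (hc ?_).elim)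
    exact (G.cost_le_of_mem hl.2).trans_lt (by exact_mod_cast hl.1)

theorem costLT_congr {m : ℕ} (h : ∀ t < m, ρ t = ρ' t) : G.costLT i ρ m = G.costLT i ρ' m := by
  have hset : {l | l < m ∧ ρ l ∈ G.F i} = {l | l < m ∧ ρ' l ∈ G.F i} :=
    Set.ext fun l => and_congr_right fun hl => by rw [h l hl]
  simp only [costLT, hset]

theorem cost_eq_of_forall_lt_eq {n : ℕ} (h : ∀ t < n, ρ t = ρ' t) (hlt : G.cost i ρ < n) :
    G.cost i ρ' = G.cost i ρ := by
  have := G.costLT_congr (i := i) h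
  rw [costLT_eq_truncCost, costLT_eq_truncCost, truncCost_of_lt hlt] at this
  exact eq_of_truncCost_eq this.symm hlt

theorem costLT_eq_of_le {m n : ℕ} (hmn : m ≤ n) (h : G.costLT i ρ n ≠ ⊤ → G.costLT i ρ n < m) :
    G.costLT i ρ m = G.costLT i ρ n := by
  rw [costLT_eq_truncCost, ← truncCost_truncCost hmn, ← costLT_eq_truncCost]
  by_cases hn : G.costLT i ρ n = ⊤
  · rw [hn, truncCost_of_le le_top]
  · exact truncCost_of_lt (h hn)

theorem cost_eq_costLT {n : ℕ} (h : ∀ t, ∃ t' < n, ρ t' = ρ t) :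
    G.cost i ρ = G.costLT i ρ n := by
  rw [costLT_eq_truncCost]
  by_cases hc : G.cost i ρ < n
  · exact (truncCost_of_lt hc).symm
  · rw [truncCost_of_le (not_lt.1 hc)]
    by_contra hne
    obtain ⟨l, hl, -⟩ := G.exists_cost_eq hne
    obtain ⟨t', ht', heq⟩ := h l
    exact hc ((G.cost_le_of_mem (heq ▸ hl)).trans_lt (by exact_mod_cast ht'))

end Cost

section Play

variable {ι V : Type}

/-- The history `ρ₀ … ρₙ` of a play, as a reversed list. -/
def histUpTo (w : ℕ → V) (n : ℕ) : List V := ((List.range (n + 1)).map w).reverse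

section Histories

variable {w w' : ℕ → V} {n : ℕ}

@[simp]
theorem reverse_histUpTo : (histUpTo w n).reverse = (List.range (n + 1)).map w := by
  simp [histUpTo]

@[simp]
theorem length_histUpTo : (histUpTo w n).length = n + 1 := by
  simp [histUpTo]

theorem histUpTo_zero : histUpTo w 0 = [w 0] := rfl

theorem histUpTo_succ : histUpTo w (n + 1) = w (n + 1) :: histUpTo w n := by
  simp [histUpTo, List.range_succ]

@[simp]
theorem cur_histUpTo (v₀ : V) : cur v₀ (histUpTo w n) = w n := by
  cases n <;> simp [histUpTo_succ, histUpTo_zero, cur]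

theorem histUpTo_congr (h : ∀ k ≤ n, w k = w' k) : histUpTo w n = histUpTo w' n := by
  simp only [histUpTo]
  congr 1
  exact List.map_congr_left fun k hk => h k (by simp at hk; omega)

theorem isHist_cons {G : QRGame ι V} {v₀ v : V} {h : List V} (hh : h ≠ []) :
    G.IsHist v₀ (v :: h) ↔ G.E (cur v₀ h) v ∧ G.IsHist v₀ h := by
  obtain ⟨u, t, rfl⟩ := List.exists_cons_of_ne_nil hh
  rfl

theorem IsHist.exists_length_eq {G : QRGame ι V} {v₀ : V} {h : List V} (hh : G.IsHist v₀ h) :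
    ∃ n, h.length = n + 1 := by
  cases h with
  | nil => exact hh.elim
  | cons x t => exact ⟨_, rfl⟩

theorem isHist_histUpTo (G : QRGame ι V) {v₀ : V} (h0 : w 0 = v₀)
    (hE : ∀ k < n, G.E (w k) (w (k + 1))) : G.IsHist v₀ (histUpTo w n) := by
  induction n with
  | zero => exact h0
  | succ n ih =>
    rw [histUpTo_succ, isHist_cons (List.ne_nil_of_length_pos (by simp)), cur_histUpTo]
    exact ⟨hE n n.lt_succ_self, ih fun k hk => hE k (hk.trans n.lt_succ_self)⟩

end Histories

section Outcome

variable (G : QRGame ι V) (v₀ : V) (s : ι → List V → V)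

theorem histFrom_eq_histUpTo_cur (n : ℕ) :
    G.histFrom v₀ s [v₀] n = histUpTo (fun k => cur v₀ (G.histFrom v₀ s [v₀] k)) n := by
  induction n with
  | zero => rfl
  | succ n ih => rw [histUpTo_succ, ← ih]; rfl

theorem outcome_eq_cur : G.outcome v₀ s = fun n => cur v₀ (G.histFrom v₀ s [v₀] n) := by
  funext n
  rw [outcome, fullPlay, histFrom_eq_histUpTo_cur, reverse_histUpTo,
    List.getD_eq_getElem _ _ (by simp)]
  simp

theorem outcome_succ (n : ℕ) :
    G.outcome v₀ s (n + 1) = s (G.owner (G.outcome v₀ s n)) (histUpTo (G.outcome v₀ s) n) := by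
  rw [outcome_eq_cur, ← histFrom_eq_histUpTo_cur]
  rfl

variable {G v₀ s}

theorem outcome_eq_of_succ {w : ℕ → V} {n : ℕ} (h0 : w 0 = v₀)
    (hstep : ∀ t < n, w (t + 1) = s (G.owner (w t)) (histUpTo w t)) :
    ∀ t ≤ n, G.outcome v₀ s t = w t := by
  suffices h : ∀ t ≤ n, ∀ k ≤ t, G.outcome v₀ s k = w k from fun t ht => h t ht t le_rfl
  intro t
  induction t with
  | zero =>
    intro _ k hk
    rw [Nat.le_zero.1 hk]
    exact h0.symm
  | succ t ih =>
    intro ht k hk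
    have hpre := ih (by omega)
    rcases Nat.lt_or_ge k (t + 1) with hk' | hk'
    · exact hpre k (by omega)
    · rw [show k = t + 1 by omega, outcome_succ, histUpTo_congr hpre, hpre t le_rfl, hstep t ht]

theorem IsStrat.isStratTrunc {i : ι} {σ : List V → V} (h : G.IsStrat v₀ i σ) (d : ℕ) :
    G.IsStratTrunc v₀ d i σ :=
  fun h' hh _ ho => h h' hh ho

theorem outcome_edge {d : ℕ} (hs : ∀ i, G.IsStratTrunc v₀ d i (s i)) {t : ℕ} (ht : t < d) :
    G.E (G.outcome v₀ s t) (G.outcome v₀ s (t + 1)) := by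
  induction t using Nat.strong_induction_on with
  | _ t ih =>
    have hh : G.IsHist v₀ (histUpTo (G.outcome v₀ s) t) :=
      isHist_histUpTo G rfl fun k hk => ih k hk (hk.trans ht)
    rw [outcome_succ]
    simpa using hs _ _ hh (by simp; omega) (by simp)

theorem IsProfile.update [DecidableEq ι] (hs : G.IsProfile v₀ s) {j : ι} {σ : List V → V}
    (h : G.IsStrat v₀ j σ) : G.IsProfile v₀ (Function.update s j σ) :=
  (Function.forall_update_iff s fun i s => G.IsStrat v₀ i s).2 ⟨h, fun i _ => hs i⟩

theorem IsProfile.outcome_edge (hs : G.IsProfile v₀ s) (t : ℕ) :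
    G.E (G.outcome v₀ s t) (G.outcome v₀ s (t + 1)) :=
  QRGame.outcome_edge (fun i => (hs i).isStratTrunc (t + 1)) t.lt_succ_self

end Outcome

end Play

section AgreeLen

variable {V : Type}

noncomputable def agreeLen (w : ℕ → V) : List V → ℕ
  | [] => 0
  | x :: l => if x = w 0 then agreeLen (fun n => w (n + 1)) l + 1 else 0

theorem agreeLen_le_length (w : ℕ → V) (l : List V) : agreeLen w l ≤ l.length := by
  induction l generalizing w with
  | nil => exact le_rfl
  | cons x l ih =>
    simp only [agreeLen, List.length_cons]
    split_ifs
    · exact Nat.succ_le_succ (ih _)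
    · exact Nat.zero_le _

theorem agreeLen_append (w : ℕ → V) (l₁ l₂ : List V) :
    agreeLen w (l₁ ++ l₂) = if agreeLen w l₁ = l₁.length
      then l₁.length + agreeLen (fun n => w (l₁.length + n)) l₂ else agreeLen w l₁ := by
  induction l₁ generalizing w with
  | nil => simp [agreeLen]
  | cons x l₁ ih =>
    by_cases hx : x = w 0
    · simp only [List.cons_append, agreeLen, hx, if_true, ih, List.length_cons,
        Nat.add_right_cancel_iff]
      split_ifs
      · simp only [Nat.add_right_comm _ 1, Nat.add_assoc]
      · rfl
    · simp [agreeLen, hx]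

theorem map_range_of_agreeLen {w : ℕ → V} {l : List V} (h : agreeLen w l = l.length) :
    (List.range l.length).map w = l := by
  induction l generalizing w with
  | nil => rfl
  | cons x l ih =>
    simp only [agreeLen, List.length_cons] at h
    split_ifs at h with hx
    rw [List.length_cons, List.range_succ_eq_map, List.map_cons, List.map_map, hx]
    exact congrArg _ (ih (Nat.succ_injective h))

theorem agreeLen_map_range {u w : ℕ → V} {q n : ℕ} (hqn : q ≤ n) (hagree : ∀ k < q, u k = w k)
    (hne : q < n → u q ≠ w q) : agreeLen w ((List.range n).map u) = q := by
  induction n generalizing u w q with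
  | zero => simp [agreeLen, Nat.le_zero.1 hqn]
  | succ n ih =>
    rw [List.range_succ_eq_map, List.map_cons, List.map_map]
    cases q with
    | zero => simp [agreeLen, hne (Nat.succ_pos n)]
    | succ q =>
      simp only [agreeLen, hagree 0 q.succ_pos, if_true]
      exact congrArg (· + 1) (ih (by omega) (fun k hk => hagree (k + 1) (by omega))
        fun hq => hne (by omega))

variable {w : ℕ → V}

theorem agreeLen_map_range_self (n : ℕ) : agreeLen w ((List.range n).map w) = n :=
  agreeLen_map_range le_rfl (fun _ _ => rfl) fun h => absurd h (lt_irrefl n)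

theorem cur_eq_of_agreeLen (v₀ : V) {h : List V} {n : ℕ} (hn : h.length = n + 1)
    (hw : agreeLen w h.reverse = h.length) : cur v₀ h = w n := by
  have hrev := map_range_of_agreeLen (hw.trans h.length_reverse.symm)
  rw [List.length_reverse, hn, ← reverse_histUpTo, List.reverse_inj] at hrev
  rw [← hrev, cur_histUpTo]

end AgreeLen

section LassoPlay

theorem exists_lt_map_eq {V : Type} [Fintype V] (f : ℕ → V) (n : ℕ) :
    ∃ a b, n ≤ a ∧ a < b ∧ b ≤ n + Fintype.card V ∧ f a = f b := by
  obtain ⟨x, hx, y, hy, hxy, hf⟩ := Finset.exists_ne_map_eq_of_card_lt_of_maps_to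
    (s := Finset.Icc n (n + Fintype.card V)) (t := Finset.univ) (by simp; omega) (f := f)
    fun _ _ => Finset.mem_coe.2 (Finset.mem_univ _)
  rw [Finset.mem_Icc] at hx hy
  rcases hxy.lt_or_gt with h | h
  · exact ⟨x, y, hx.1, h, hy.2, hf⟩
  · exact ⟨y, x, hy.1, h, hx.2, hf.symm⟩

variable {V : Type} (ρ : ℕ → V) (a p : ℕ)

def lassoIdx (t : ℕ) : ℕ := if t < a then t else a + (t - a) % p

/-- The lasso play `ρ₀ … ρ_{a-1} (ρ_a … ρ_{a+p-1})^ω`. -/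
def lasso (t : ℕ) : V := ρ (lassoIdx a p t)

variable {ρ a p}

theorem lassoIdx_lt (hp : 0 < p) (t : ℕ) : lassoIdx a p t < a + p := by
  unfold lassoIdx
  split_ifs
  · omega
  · have := Nat.mod_lt (t - a) hp
    omega

theorem lassoIdx_of_lt {t : ℕ} (ht : t < a + p) : lassoIdx a p t = t := by
  unfold lassoIdx
  split_ifs
  · rfl
  · rw [Nat.mod_eq_of_lt (by omega)]
    omega

theorem lasso_of_lt {t : ℕ} (ht : t < a + p) : lasso ρ a p t = ρ t := by
  rw [lasso, lassoIdx_of_lt ht]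

theorem lasso_add_period {t : ℕ} (ht : a ≤ t) : lasso ρ a p (t + p) = lasso ρ a p t := by
  simp only [lasso, lassoIdx, show ¬ t + p < a by omega, show ¬ t < a by omega, if_false,
    show t + p - a = t - a + p by omega, Nat.add_mod_right]

theorem exists_lasso_eq (hp : 0 < p) (t : ℕ) : ∃ t' < a + p, lasso ρ a p t = ρ t' :=
  ⟨_, lassoIdx_lt hp t, rfl⟩

theorem lasso_edge {R : V → V → Prop} (hp : 0 < p) (hloop : ρ (a + p) = ρ a)
    (hR : ∀ t < a + p, R (ρ t) (ρ (t + 1))) (t : ℕ) : R (lasso ρ a p t) (lasso ρ a p (t + 1)) := by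
  have hsucc : lasso ρ a p (t + 1) = ρ (lassoIdx a p t + 1) := by
    rcases lt_or_ge t a with ht | ht
    · rw [lasso_of_lt (by omega), lassoIdx_of_lt (by omega)]
    have hr := Nat.mod_lt (t - a) hp
    have hidx : lassoIdx a p t = a + (t - a) % p := if_neg (by omega)
    have hidx1 : lassoIdx a p (t + 1) = a + ((t - a) % p + 1) % p := by
      rw [lassoIdx, if_neg (by omega), show t + 1 - a = t - a + 1 by omega, Nat.mod_add_mod]
    rw [lasso, hidx1, hidx]
    rcases (show (t - a) % p + 1 ≤ p by omega).lt_or_eq with hlt | heq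
    · rw [Nat.mod_eq_of_lt hlt, Nat.add_assoc]
    · rw [heq, Nat.mod_self, Nat.add_zero, show a + (t - a) % p + 1 = a + p by omega, hloop]
  rw [hsucc]
  exact hR _ (lassoIdx_lt hp t)

theorem cost_lasso {ι : Type} (G : QRGame ι V) {i : ι} {n : ℕ} (hp : 0 < p) (hn : a + p ≤ n)
    (h : G.costLT i ρ n ≠ ⊤ → G.costLT i ρ n < a + p) :
    G.cost i (lasso ρ a p) = G.costLT i ρ n := by
  rw [G.cost_eq_costLT fun t => ⟨lassoIdx a p t, lassoIdx_lt hp t, lasso_of_lt (lassoIdx_lt hp t)⟩,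
    G.costLT_congr fun t ht => lasso_of_lt ht, G.costLT_eq_of_le hn h]

end LassoPlay

section Attractor

variable {ι V : Type} (G : QRGame ι V)

noncomputable def pickSucc (v : V) (P : V → Prop) : V :=
  if h : ∃ w, G.E v w ∧ P w then h.choose else (G.total v).choose

theorem edge_pickSucc (v : V) (P : V → Prop) : G.E v (G.pickSucc v P) := by
  unfold pickSucc
  split_ifs with h
  exacts [h.choose_spec.1, (G.total v).choose_spec]

theorem pickSucc_spec {v : V} {P : V → Prop} (h : ∃ w, G.E v w ∧ P w) : P (G.pickSucc v P) := by
  rw [pickSucc, dif_pos h]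
  exact h.choose_spec.2

variable (j : ι)

/-- The controllable predecessor of `S` for player `j` against the coalition of the others. -/
def cpre (S : Set V) : Set V :=
  {v | (G.owner v = j ∧ ∃ w, G.E v w ∧ w ∈ S) ∨ (G.owner v ≠ j ∧ ∀ w, G.E v w → w ∈ S)}

/-- The vertices from which player `j` can force a visit to `F j` within `k` steps. -/
def attr : ℕ → Set V
  | 0 => G.F j
  | k + 1 => attr k ∪ G.cpre j (attr k)

/-- The winning region of player `j` in the zero-sum game where `j` wants to reach `F j`. -/
def win [Fintype V] : Set V := G.attr j (Fintype.card V)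

theorem attr_mono : Monotone (G.attr j) :=
  monotone_nat_of_le_succ fun _ => Set.subset_union_left

theorem exists_succ_eq_of_subset_succ [Fintype V] {s : ℕ → Set V} (hs : ∀ k, s k ⊆ s (k + 1)) :
    ∃ k ≤ Fintype.card V, s (k + 1) = s k := by
  by_contra! hne
  have hgrow : ∀ k ≤ Fintype.card V + 1, k ≤ (s k).ncard := by
    intro k hk
    induction k with
    | zero => exact Nat.zero_le _
    | succ k ih =>
      have hlt := Set.ncard_lt_ncard ((hs k).ssubset_of_ne (hne k (by omega)).symm)
      exact (ih (by omega)).trans_lt hlt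
  have := (hgrow _ le_rfl).trans ((s _).ncard_le_card)
  rw [Nat.card_eq_fintype_card] at this
  omega

theorem cpre_win_subset [Fintype V] : G.cpre j (G.win j) ⊆ G.win j := by
  obtain ⟨k, hk, hfix⟩ := exists_succ_eq_of_subset_succ fun k => (G.attr_mono j k.le_succ)
  have hstable : ∀ m, G.attr j (k + m) = G.attr j k := by
    intro m
    induction m with
    | zero => rfl
    | succ m ih => rw [← Nat.add_assoc, attr, ih, ← attr, hfix]
  have hwin : G.win j = G.attr j k := by
    rw [win, ← Nat.add_sub_cancel' hk, hstable]
  have hsub : G.cpre j (G.attr j k) ⊆ G.attr j (k + 1) := Set.subset_union_right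
  rw [hwin]
  rwa [hfix] at hsub

theorem F_subset_win [Fintype V] : G.F j ⊆ G.win j :=
  G.attr_mono j (Nat.zero_le _)

theorem notMem_win_of_owner_eq [Fintype V] {v w : V} (hv : v ∉ G.win j) (ho : G.owner v = j)
    (he : G.E v w) : w ∉ G.win j :=
  fun hw => hv (G.cpre_win_subset j (Or.inl ⟨ho, w, he, hw⟩))

/-- The positional strategy of the coalition against `j`, staying outside `j`'s winning region. -/
noncomputable def punish [Fintype V] (v : V) : V := G.pickSucc v (· ∉ G.win j)

theorem notMem_win_of_punish [Fintype V] {π : ℕ → V} (h0 : π 0 ∉ G.win j)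
    (hj : ∀ t, G.owner (π t) = j → G.E (π t) (π (t + 1)))
    (hc : ∀ t, G.owner (π t) ≠ j → π (t + 1) = G.punish j (π t)) : ∀ t, π t ∉ G.win j := by
  intro t
  induction t with
  | zero => exact h0
  | succ t ih =>
    by_cases ho : G.owner (π t) = j
    · exact G.notMem_win_of_owner_eq j ih ho (hj t ho)
    · rw [hc t ho]
      refine G.pickSucc_spec (P := (· ∉ G.win j)) ?_
      by_contra! hall
      exact ih (G.cpre_win_subset j (Or.inr ⟨ho, hall⟩))

theorem cost_eq_top_of_punish [Fintype V] {π : ℕ → V} {s : ℕ} (hpre : ∀ t ≤ s, π t ∉ G.win j)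
    (hj : ∀ t, G.owner (π t) = j → G.E (π t) (π (t + 1)))
    (hc : ∀ t ≥ s, G.owner (π t) ≠ j → π (t + 1) = G.punish j (π t)) : G.cost j π = ⊤ := by
  have hafter := G.notMem_win_of_punish j (π := fun t => π (s + t)) (by simpa using hpre s le_rfl)
    (fun t => hj (s + t)) fun t => hc (s + t) (Nat.le_add_right s t)
  by_contra hne
  obtain ⟨l, hl, -⟩ := G.exists_cost_eq hne
  have hwin : π l ∈ G.win j := G.F_subset_win j hl
  rcases le_or_gt l s with hls | hsl
  · exact hpre l hls hwin
  · exact hafter (l - s) (by rwa [Nat.add_sub_cancel' hsl.le])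

theorem cost_eq_top_of_punish_after [Fintype V] {π w : ℕ → V} {q : ℕ}
    (hwW : ∀ t, w t ∉ G.win j) (hπE : ∀ t, G.E (π t) (π (t + 1))) (hq : 0 < q)
    (hagree : ∀ k < q, π k = w k) (howner : G.owner (w (q - 1)) = j)
    (hpunish : ∀ t ≥ q, G.owner (π t) ≠ j → π (t + 1) = G.punish j (π t)) : G.cost j π = ⊤ := by
  refine G.cost_eq_top_of_punish j (s := q) (fun t ht => ?_) (fun t _ => hπE t) hpunish
  rcases lt_or_eq_of_le ht with ht | rfl
  · exact hagree t ht ▸ hwW t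
  · have hpred := hagree (t - 1) (by omega)
    refine G.notMem_win_of_owner_eq j (hpred ▸ hwW (t - 1)) (hpred ▸ howner) ?_
    simpa [Nat.sub_add_cancel hq] using hπE (t - 1)

/-- The least `k` with `v ∈ attr G j k` (junk `0` if there is none). -/
noncomputable def attrRank (v : V) : ℕ := sInf {k | v ∈ G.attr j k}

/-- The positional attractor strategy of player `j`, decreasing the attractor rank. -/
noncomputable def attrMove (v : V) : V := G.pickSucc v (· ∈ G.attr j (G.attrRank j v - 1))

theorem attrMove_mem {v : V} {k : ℕ} (hv : v ∈ G.attr j (k + 1)) (hnv : v ∉ G.attr j k)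
    (ho : G.owner v = j) : G.attrMove j v ∈ G.attr j k := by
  have hrank : G.attrRank j v = k + 1 := by
    refine le_antisymm (Nat.sInf_le hv) (Nat.succ_le_of_lt (not_le.1 fun hle => hnv ?_))
    exact G.attr_mono j hle (Nat.sInf_mem (s := {k | v ∈ G.attr j k}) ⟨k + 1, hv⟩)
  have hsucc : ∃ w, G.E v w ∧ w ∈ G.attr j k := by
    rcases hv with hv | ⟨-, hw⟩ | ⟨hne, -⟩
    exacts [(hnv hv).elim, hw, (hne ho).elim]
  unfold attrMove
  rw [hrank]
  exact G.pickSucc_spec hsucc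

theorem exists_mem_F_of_mem_attr {π : ℕ → V} {k : ℕ} (h0 : π 0 ∈ G.attr j k)
    (hj : ∀ t < k, G.owner (π t) = j → π (t + 1) = G.attrMove j (π t))
    (hc : ∀ t < k, G.owner (π t) ≠ j → G.E (π t) (π (t + 1))) : ∃ t ≤ k, π t ∈ G.F j := by
  induction k generalizing π with
  | zero => exact ⟨0, le_rfl, h0⟩
  | succ k ih =>
    by_cases hk : π 0 ∈ G.attr j k
    · obtain ⟨t, ht, hF⟩ := ih hk (fun t ht => hj t (by omega)) fun t ht => hc t (by omega)
      exact ⟨t, by omega, hF⟩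
    have h1 : π 1 ∈ G.attr j k := by
      by_cases ho : G.owner (π 0) = j
      · rw [hj 0 k.succ_pos ho]
        exact G.attrMove_mem j h0 hk ho
      · rcases h0 with h0 | ⟨ho', -⟩ | ⟨-, hall⟩
        exacts [(hk h0).elim, (ho ho').elim, hall _ (hc 0 k.succ_pos ho)]
    obtain ⟨t, ht, hF⟩ := ih (π := fun t => π (t + 1)) h1 (fun t ht => hj (t + 1) (by omega))
      fun t ht => hc (t + 1) (by omega)
    exact ⟨t + 1, by omega, hF⟩

end Attractor

section Replay

variable {ι V : Type} [Fintype V] [DecidableEq ι] {G : QRGame ι V} {v₀ : V} {d : ℕ}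
  {σ : ι → List V → V}

/-- Player `j` replays `w` up to time `n`, then plays the attractor strategy from `w n`. -/
theorem exists_strat_costLT_ne_top (hstrat : ∀ i, G.IsStratTrunc v₀ d i (σ i)) (j : ι)
    {w : ℕ → V} {n : ℕ} (hw0 : w 0 = v₀) (hnd : n + Fintype.card V ≤ d)
    (hE : ∀ k < n, G.E (w k) (w (k + 1)))
    (hcoal : ∀ k < n, G.owner (w k) ≠ j → w (k + 1) = σ (G.owner (w k)) (histUpTo w k))
    (hwin : w n ∈ G.win j) : ∃ σ', G.IsStratTrunc v₀ d j σ' ∧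
      G.costLT j (G.outcome v₀ (Function.update σ j σ')) (d + 1) ≠ ⊤ := by
  let σ' : List V → V := fun h =>
    if agreeLen w h.reverse = h.length ∧ h.length ≤ n then w h.length else G.attrMove j (cur v₀ h)
  have hσ' : G.IsStratTrunc v₀ d j σ' := by
    intro h hh _ _
    obtain ⟨m, hm⟩ := hh.exists_length_eq
    simp only [σ']
    split_ifs with hc
    · rw [cur_eq_of_agreeLen v₀ hm hc.1, hm]
      exact hE m (by omega)
    · exact G.edge_pickSucc _ _
  set s := Function.update σ j σ'
  have hs : ∀ i, G.IsStratTrunc v₀ d i (s i) :=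
    (Function.forall_update_iff σ fun i s => G.IsStratTrunc v₀ d i s).2 ⟨hσ', fun i _ => hstrat i⟩
  have hfollow : ∀ t ≤ n, G.outcome v₀ s t = w t := outcome_eq_of_succ hw0 fun t ht => by
    by_cases ho : G.owner (w t) = j
    · simp [s, ho, σ', agreeLen_map_range_self, Nat.succ_le_of_lt ht]
    · simp only [s, Function.update_of_ne ho, ← hcoal t ht ho]
  obtain ⟨t, ht, hF⟩ := G.exists_mem_F_of_mem_attr j (π := fun t => G.outcome v₀ s (n + t))
    (k := Fintype.card V) (by
      show G.outcome v₀ s (n + 0) ∈ G.win j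
      rwa [Nat.add_zero, hfollow n le_rfl])
    (fun t _ ho => by
      rw [← Nat.add_assoc, outcome_succ, ho]
      simp [s, σ'])
    fun t ht _ => outcome_edge hs (by omega)
  exact ⟨σ', hσ', ne_top_of_le_ne_top (ENat.natCast_ne_top _) (G.costLT_le_of_mem (by omega) hF)⟩

theorem IsSecureTrunc.notMem_win (hstrat : ∀ i, G.IsStratTrunc v₀ d i (σ i))
    (hsec : G.IsSecureTrunc v₀ d σ) {j : ι} (htop : G.costLT j (G.outcome v₀ σ) (d + 1) = ⊤)
    {w : ℕ → V} {n : ℕ} (hw0 : w 0 = v₀) (hnd : n + Fintype.card V ≤ d)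
    (hE : ∀ k < n, G.E (w k) (w (k + 1)))
    (hcoal : ∀ k < n, G.owner (w k) ≠ j → w (k + 1) = σ (G.owner (w k)) (histUpTo w k)) :
    w n ∉ G.win j := by
  intro hwin
  obtain ⟨σ', hσ', hne⟩ := exists_strat_costLT_ne_top hstrat j hw0 hnd hE hcoal hwin
  refine hsec ⟨j, σ', hσ', Or.inl ?_⟩
  show _ < G.costLT j (G.outcome v₀ σ) (d + 1)
  rw [htop]
  exact lt_top_iff_ne_top.2 hne

theorem IsSecureTrunc.notMem_win_outcome (hstrat : ∀ i, G.IsStratTrunc v₀ d i (σ i))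
    (hsec : G.IsSecureTrunc v₀ d σ) {j : ι} (htop : G.costLT j (G.outcome v₀ σ) (d + 1) = ⊤)
    {t : ℕ} (ht : t + Fintype.card V ≤ d) : G.outcome v₀ σ t ∉ G.win j :=
  hsec.notMem_win hstrat htop rfl ht (fun _ _ => outcome_edge hstrat (by omega))
    fun k _ _ => outcome_succ G v₀ σ k

theorem IsSecureTrunc.cost_eq_top (hstrat : ∀ i, G.IsStratTrunc v₀ d i (σ i))
    (hsec : G.IsSecureTrunc v₀ d σ) {j : ι} (htop : G.costLT j (G.outcome v₀ σ) (d + 1) = ⊤)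
    {π : ℕ → V} (hπ0 : π 0 = v₀) (hπE : ∀ t, G.E (π t) (π (t + 1))) {s : ℕ}
    (hsd : s + Fintype.card V ≤ d)
    (hfollow : ∀ t < s, G.owner (π t) ≠ j → π (t + 1) = σ (G.owner (π t)) (histUpTo π t))
    (hpunish : ∀ t ≥ s, G.owner (π t) ≠ j → π (t + 1) = G.punish j (π t)) : G.cost j π = ⊤ :=
  G.cost_eq_top_of_punish j
    (fun _ ht => hsec.notMem_win hstrat htop hπ0 (by omega) (fun k _ => hπE k)
      fun k hk => hfollow k (by omega))
    (fun t _ => hπE t) hpunish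

end Replay

section LassoProfile

variable {ι V : Type} [Fintype V] (G : QRGame ι V) (v₀ : V) (σ : ι → List V → V) (w : ℕ → V)
  (D E : ℕ)

/-- Follow the play `w`; after a deviation from `w` at a time `q ≤ D`, follow `σ` on histories
with at most `E` vertices; otherwise punish the deviator, the owner of `w (q - 1)`. -/
noncomputable def lassoProfile (i : ι) (h : List V) : V :=
  if agreeLen w h.reverse = h.length then w h.length
  else if agreeLen w h.reverse ≤ D ∧ h.length ≤ E then σ i h
  else G.punish (G.owner (w (agreeLen w h.reverse - 1))) (cur v₀ h)

variable {G v₀ σ w D E}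

theorem lassoProfile_histUpTo_of_forall_eq {π : ℕ → V} {t : ℕ} (h : ∀ k ≤ t, π k = w k)
    (i : ι) : lassoProfile G v₀ σ w D E i (histUpTo π t) = w (t + 1) := by
  have hA : agreeLen w (histUpTo π t).reverse = t + 1 := by
    rw [reverse_histUpTo]
    exact agreeLen_map_range le_rfl (fun k hk => h k (by omega)) fun h => absurd h (lt_irrefl _)
  rw [lassoProfile, hA, length_histUpTo, if_pos rfl]

theorem lassoProfile_histUpTo_of_le {π : ℕ → V} {q t : ℕ} (hagree : ∀ k < q, π k = w k)
    (hne : π q ≠ w q) (hqt : q ≤ t) (i : ι) :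
    lassoProfile G v₀ σ w D E i (histUpTo π t) =
      if q ≤ D ∧ t + 1 ≤ E then σ i (histUpTo π t) else G.punish (G.owner (w (q - 1))) (π t) := by
  have hA : agreeLen w (histUpTo π t).reverse = q := by
    rw [reverse_histUpTo]
    exact agreeLen_map_range (by omega) hagree fun _ => hne
  rw [lassoProfile, hA, length_histUpTo, if_neg (by omega), cur_histUpTo]

theorem outcome_lassoProfile (hw0 : w 0 = v₀) : G.outcome v₀ (lassoProfile G v₀ σ w D E) = w :=
  funext fun t => outcome_eq_of_succ hw0
    (fun _ _ => (lassoProfile_histUpTo_of_forall_eq (fun _ _ => rfl) _).symm) t le_rfl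

theorem isProfile_lassoProfile {d : ℕ} (hstrat : ∀ i, G.IsStratTrunc v₀ d i (σ i)) (hEd : E ≤ d)
    (hw : ∀ t, G.E (w t) (w (t + 1))) : G.IsProfile v₀ (lassoProfile G v₀ σ w D E) := by
  intro i h hh ho
  obtain ⟨n, hn⟩ := hh.exists_length_eq
  unfold lassoProfile
  split_ifs with hc hσ
  · rw [cur_eq_of_agreeLen v₀ hn hc, hn]
    exact hw n
  · exact hstrat i h hh (hσ.2.trans hEd) ho
  · exact G.edge_pickSucc _ _

end LassoProfile

section FiniteMemory

variable {V : Type}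

theorem finMem_of_factor {S : Type} {σ : List V → V} (f : List V → S) (hf : (Set.range f).Finite)
    (hσ : ∀ h₁ h₂, f h₁ = f h₂ → ∀ δ, σ (δ ++ h₁) = σ (δ ++ h₂)) : FinMem σ := by
  have hfac : (fun h δ => σ (δ ++ h)) = (fun s δ => σ (δ ++ Function.invFun f s)) ∘ f :=
    funext fun h => funext (hσ _ _ (Function.invFun_eq ⟨h, rfl⟩).symm)
  unfold FinMem
  rw [hfac, Set.range_comp]
  exact hf.image _

theorem finite_range_shift {w : ℕ → V} {a p : ℕ} (hp : 0 < p) (hper : ∀ t ≥ a, w (t + p) = w t) :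
    (Set.range fun L n => w (a + L + n)).Finite := by
  have hmul : ∀ t ≥ a, ∀ m, w (t + m * p) = w t := by
    intro t ht m
    induction m with
    | zero => simp
    | succ m ih => rw [Nat.succ_mul, ← Nat.add_assoc, hper _ (by omega), ih]
  refine ((Set.finite_Iio p).image fun r n => w (a + r + n)).subset ?_
  rintro _ ⟨L, rfl⟩
  refine ⟨L % p, Nat.mod_lt L hp, funext fun n => ?_⟩
  show w (a + L % p + n) = w (a + L + n)
  rw [← hmul (a + L % p + n) (by omega) (L / p)]
  congr 1
  linarith [Nat.mod_add_div' L p]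

variable {ι : Type} [Fintype V] (G : QRGame ι V) {v₀ : V} {σ : ι → List V → V} {w : ℕ → V}
  {D E : ℕ}

/-- The data of a history `h` that determine the lasso profile on all long extensions of `h`. -/
noncomputable def lassoState (v₀ : V) (w : ℕ → V) (h : List V) : Prop × (ℕ → V) × V × V :=
  (agreeLen w h.reverse = h.length, fun n => w (h.length - 1 + n), w (agreeLen w h.reverse - 1),
    cur v₀ h)

noncomputable def lassoTail : Prop × (ℕ → V) × V × V → List V → V
  | (c, u, z, v), δ =>
    if c then
      if agreeLen (fun n => u (n + 1)) δ.reverse = δ.length then u (δ.length + 1)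
      else G.punish (G.owner (u (agreeLen (fun n => u (n + 1)) δ.reverse))) (δ.headD v)
    else G.punish (G.owner z) (δ.headD v)

theorem lassoProfile_append {h : List V} (hE : E < h.length) (i : ι) (δ : List V) :
    lassoProfile G v₀ σ w D E i (δ ++ h) = G.lassoTail (lassoState v₀ w h) δ := by
  have hlong : ¬ δ.length + h.length ≤ E := by omega
  have hcur : cur v₀ (δ ++ h) = δ.headD (cur v₀ h) := by cases δ <;> rfl
  have hshift : (fun n => w (h.length - 1 + (n + 1))) = fun n => w (h.length + n) :=
    funext fun n => by congr 1; omega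
  have hle : agreeLen w h.reverse ≤ h.length := h.length_reverse ▸ agreeLen_le_length w h.reverse
  simp only [lassoProfile, lassoState, lassoTail, List.reverse_append, agreeLen_append,
    List.length_reverse, List.length_append, hcur, hshift, hlong, and_false, if_false]
  split_ifs <;> first | rfl | omega | (congr 1; omega) | (congr 4; omega)

theorem finMem_lassoProfile {a p : ℕ} (hp : 0 < p) (hper : ∀ t ≥ a, w (t + p) = w t)
    (haE : a ≤ E) (i : ι) : FinMem (lassoProfile G v₀ σ w D E i) := by
  refine finMem_of_factor
    (fun h => if h.length ≤ E then Sum.inl h else Sum.inr (lassoState v₀ w h)) ?_ ?_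
  · refine (((List.finite_length_le V E).image Sum.inl).union
      ((Set.finite_univ.prod ((finite_range_shift hp hper).prod Set.finite_univ)).image
        Sum.inr)).subset ?_
    rintro _ ⟨h, rfl⟩
    by_cases hh : h.length ≤ E
    · exact Or.inl ⟨h, hh, by simp [hh]⟩
    · refine Or.inr ⟨lassoState v₀ w h, ⟨trivial, ⟨h.length - 1 - a, ?_⟩, trivial⟩, by simp [hh]⟩
      funext n
      show w (a + (h.length - 1 - a) + n) = w (h.length - 1 + n)
      congr 1
      omega
  · intro h₁ h₂ heq δ
    by_cases hh₁ : h₁.length ≤ E <;> by_cases hh₂ : h₂.length ≤ E <;> simp [hh₁, hh₂] at heq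
    · rw [heq]
    · rw [G.lassoProfile_append (not_le.1 hh₁), G.lassoProfile_append (not_le.1 hh₂), heq]

end FiniteMemory

section Security

theorem exists_forall_lt_eq_and_ne {V : Type} {π w : ℕ → V} (h : π ≠ w) :
    ∃ q, (∀ k < q, π k = w k) ∧ π q ≠ w q := by
  by_contra! hall
  exact h (funext fun t => Nat.strong_induction_on t fun t ih => hall t ih)

variable {ι V : Type} {G : QRGame ι V} {v₀ : V} {σ : ι → List V → V} {w : ℕ → V}
  {D E : ℕ} {π : ℕ → V} {j : ι} {q : ℕ}

section

variable [DecidableEq ι] {d : ℕ}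

theorem not_prec_of_truncated_deviation
    (hdev : ∀ j σ', G.IsStratTrunc v₀ d j σ' → ¬ Prec j
      (fun i => G.costLT i (G.outcome v₀ σ) D)
      (fun i => G.costLT i (G.outcome v₀ (Function.update σ j σ')) D))
    (hcost : ∀ i, G.cost i w = G.costLT i (G.outcome v₀ σ) (d + 1))
    (hfin : ∀ i, G.cost i w ≠ ⊤ → G.cost i w < D) (hDd : D ≤ d + 1) {σ' : List V → V}
    (hσ' : G.IsStratTrunc v₀ d j σ') (hπσ : ∀ t < D, G.outcome v₀ (Function.update σ j σ') t = π t)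
    (hprec : Prec j (fun i => G.cost i w) fun i => G.cost i π)
    (hj : G.cost j w ≠ ⊤ ∨ G.cost j π = ⊤) : False := by
  refine hdev j σ' hσ' ?_
  have hX : ∀ i, G.costLT i (G.outcome v₀ σ) D = truncCost D (G.cost i w) := fun i => by
    rw [hcost, costLT_eq_truncCost, costLT_eq_truncCost, truncCost_truncCost hDd]
  have hY : ∀ i, G.costLT i (G.outcome v₀ (Function.update σ j σ')) D =
      truncCost D (G.cost i π) := fun i => by
    rw [G.costLT_congr hπσ, costLT_eq_truncCost]
  simp only [hX, hY]
  exact hprec.map_truncCost hfin hj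

end

variable [Fintype V]

theorem owner_pred_eq_of_lassoProfile (hπ : ∀ t, G.owner (π t) ≠ j →
      π (t + 1) = lassoProfile G v₀ σ w D E (G.owner (π t)) (histUpTo π t))
    (hq : 0 < q) (hagree : ∀ k < q, π k = w k) (hne : π q ≠ w q) : G.owner (w (q - 1)) = j := by
  by_contra ho
  rw [← hagree _ (by omega)] at ho
  refine hne ?_
  rw [show q = q - 1 + 1 by omega, hπ _ ho]
  exact lassoProfile_histUpTo_of_forall_eq (fun k hk => hagree k (by omega)) _

theorem succ_eq_strat_of_lassoProfile (hπ : ∀ t, G.owner (π t) ≠ j →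
      π (t + 1) = lassoProfile G v₀ σ w D E (G.owner (π t)) (histUpTo π t))
    (hw : ∀ t ≤ D, w t = G.outcome v₀ σ t) (hagree : ∀ k < q, π k = w k) (hne : π q ≠ w q)
    (hqD : q ≤ D) {t : ℕ} (ht : t < E) (ho : G.owner (π t) ≠ j) :
    π (t + 1) = σ (G.owner (π t)) (histUpTo π t) := by
  rcases lt_or_ge t q with htq | htq
  · have hπρ : ∀ k ≤ t, π k = G.outcome v₀ σ k :=
      fun k hk => (hagree k (by omega)).trans (hw k (by omega))
    rw [hπ t ho, lassoProfile_histUpTo_of_forall_eq (t := t) (fun k hk => hagree k (by omega)),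
      hw (t + 1) (by omega), outcome_succ, histUpTo_congr hπρ, hπρ t le_rfl]
  · rw [hπ t ho, lassoProfile_histUpTo_of_le hagree hne htq, if_pos ⟨hqD, ht⟩]

variable [DecidableEq ι] {d : ℕ}

theorem cost_eq_top_of_lassoProfile {b : ℕ} (hstrat : ∀ i, G.IsStratTrunc v₀ d i (σ i))
    (hsec : G.IsSecureTrunc v₀ d σ) (htop : G.costLT j (G.outcome v₀ σ) (d + 1) = ⊤)
    (hw : ∀ t ≤ D, w t = G.outcome v₀ σ t) (hwb : ∀ t, ∃ t' < b, w t = G.outcome v₀ σ t')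
    (hDE : D ≤ E) (hEd : E + Fintype.card V ≤ d) (hbd : b + Fintype.card V ≤ d)
    (hπ : ∀ t, G.owner (π t) ≠ j →
      π (t + 1) = lassoProfile G v₀ σ w D E (G.owner (π t)) (histUpTo π t))
    (hπE : ∀ t, G.E (π t) (π (t + 1))) (hq : 0 < q) (hagree : ∀ k < q, π k = w k)
    (hne : π q ≠ w q) : G.cost j π = ⊤ := by
  have howner := owner_pred_eq_of_lassoProfile hπ hq hagree hne
  have hpunish : ∀ t ≥ q, ¬ (q ≤ D ∧ t + 1 ≤ E) → G.owner (π t) ≠ j →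
      π (t + 1) = G.punish j (π t) := fun t ht hlate ho => by
    rw [hπ t ho, lassoProfile_histUpTo_of_le hagree hne ht, if_neg hlate, howner]
  by_cases hqD : q ≤ D
  · exact hsec.cost_eq_top hstrat htop ((hagree 0 hq).trans (hw 0 (Nat.zero_le D))) hπE hEd
      (fun t ht ho => succ_eq_strat_of_lassoProfile hπ hw hagree hne hqD ht ho)
      fun t ht ho => hpunish t (by omega) (by omega) ho
  · refine G.cost_eq_top_of_punish_after j (fun t => ?_) hπE hq hagree howner
      fun t ht => hpunish t ht (by omega)
    obtain ⟨t', ht', hwt⟩ := hwb t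
    exact hwt ▸ hsec.notMem_win_outcome hstrat htop (by omega)

theorem isSecure_lassoProfile {b : ℕ} (hstrat : ∀ i, G.IsStratTrunc v₀ d i (σ i))
    (hsec : G.IsSecureTrunc v₀ d σ)
    (hdev : ∀ j σ', G.IsStratTrunc v₀ d j σ' → ¬ Prec j
      (fun i => G.costLT i (G.outcome v₀ σ) D)
      (fun i => G.costLT i (G.outcome v₀ (Function.update σ j σ')) D))
    (hw : ∀ t ≤ D, w t = G.outcome v₀ σ t) (hwb : ∀ t, ∃ t' < b, w t = G.outcome v₀ σ t')
    (hwE : ∀ t, G.E (w t) (w (t + 1)))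
    (hcost : ∀ i, G.cost i w = G.costLT i (G.outcome v₀ σ) (d + 1))
    (hfin : ∀ i, G.cost i w ≠ ⊤ → G.cost i w < D)
    (hDE : D ≤ E) (hEd : E + Fintype.card V ≤ d) (hbd : b + Fintype.card V ≤ d) :
    G.IsSecure v₀ (lassoProfile G v₀ σ w D E) := by
  have hw0 : w 0 = v₀ := hw 0 (Nat.zero_le D)
  rintro ⟨j, σ', hσ', hprec⟩
  let π := G.outcome v₀ (Function.update (lassoProfile G v₀ σ w D E) j σ')
  have hπsucc : ∀ t, π (t + 1) =
      Function.update (lassoProfile G v₀ σ w D E) j σ' (G.owner (π t)) (histUpTo π t) :=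
    outcome_succ G v₀ _
  have hπ : ∀ t, G.owner (π t) ≠ j →
      π (t + 1) = lassoProfile G v₀ σ w D E (G.owner (π t)) (histUpTo π t) :=
    fun t ho => by rw [hπsucc, Function.update_of_ne ho]
  change Prec j (fun i => G.cost i (G.outcome v₀ (lassoProfile G v₀ σ w D E)))
    (fun i => G.cost i π) at hprec
  rw [outcome_lassoProfile hw0] at hprec
  obtain ⟨q, hagree, hne⟩ := exists_forall_lt_eq_and_ne fun h : π = w => Prec.irrefl (h ▸ hprec)
  have hq : 0 < q := Nat.pos_of_ne_zero fun hq0 => hne (by rw [hq0, hw0]; rfl)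
  by_cases hcase : G.cost j w = ⊤ ∧ G.cost j π ≠ ⊤
  · refine hcase.2 (cost_eq_top_of_lassoProfile hstrat hsec (hcost j ▸ hcase.1) hw hwb hDE hEd hbd
      hπ ?_ hq hagree hne)
    exact ((isProfile_lassoProfile hstrat (by omega) hwE).update hσ').outcome_edge
  have hqD : q ≤ D := by
    by_contra hqD
    exact hcase (hprec.top_of_forall_eq fun i hi => G.cost_eq_of_forall_lt_eq
      (fun t ht => (hagree t ht).symm) ((hfin i hi).trans_le (by exact_mod_cast (not_le.1 hqD).le)))
  have hπσ : ∀ t ≤ E, G.outcome v₀ (Function.update σ j σ') t = π t :=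
    outcome_eq_of_succ rfl fun t ht => by
      by_cases ho : G.owner (π t) = j
      · rw [hπsucc, ho, Function.update_self, Function.update_self]
      · rw [Function.update_of_ne ho, succ_eq_strat_of_lassoProfile hπ hw hagree hne hqD ht ho]
  exact not_prec_of_truncated_deviation hdev hcost hfin (by omega) (hσ'.isStratTrunc d)
    (fun t ht => hπσ t (by omega)) hprec ((not_and_or.1 hcase).imp_right not_ne_iff.1)

end Security

theorem GoalOptTrunc.exists_devBoundTrunc_eq {ι V : Type} [Fintype V] {G : QRGame ι V} {v₀ : V}
    {d Γ : ℕ} {σ : ι → List V → V} (hgoal : G.GoalOptTrunc v₀ d σ Γ) :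
    ∃ M ≤ Γ, G.devBoundTrunc v₀ d σ = M + Fintype.card V ∧
      ∀ i, G.costLT i (G.outcome v₀ σ) (d + 1) ≠ ⊤ → G.costLT i (G.outcome v₀ σ) (d + 1) ≤ M := by
  have hS : (⨆ i ∈ {i | G.costLT i (G.outcome v₀ σ) (d + 1) ≠ ⊤},
      G.costLT i (G.outcome v₀ σ) (d + 1)) ≤ Γ := iSup₂_le fun i hi => (hgoal i hi).le
  refine ⟨_, ENat.toNat_le_of_le_natCast hS, rfl, fun i hi => ?_⟩
  rw [ENat.natCast_toNat (ne_top_of_le_ne_top (ENat.natCast_ne_top Γ) hS)]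
  exact le_iSup₂ (f := fun i _ => G.costLT i (G.outcome v₀ σ) (d + 1)) i hi

end QRGame

theorem secure_equilibrium_from_truncated_same_costs_general
    {ι V : Type} [Fintype V] [DecidableEq ι]
    (G : QRGame ι V) (v₀ : V) (Γ d : ℕ)
    (hd : d = Γ + 3 * Fintype.card V)
    (σ : ι → List V → V)
    (hstrat : ∀ i, G.IsStratTrunc v₀ d i (σ i))
    (hsec : G.IsSecureTrunc v₀ d σ)
    (hgoal : G.GoalOptTrunc v₀ d σ Γ) (hdev : G.DevOptTrunc v₀ d σ) :
    ∃ τ : ι → List V → V, G.IsProfile v₀ τ ∧ G.IsSecure v₀ τ ∧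
      (∀ i, QRGame.FinMem (τ i)) ∧
      ∀ i, G.cost i (G.outcome v₀ τ) = G.costLT i (G.outcome v₀ σ) (d + 1) := by
  obtain ⟨M, hMΓ, hD, hM⟩ := hgoal.exists_devBoundTrunc_eq
  obtain ⟨a, b, hDa, hab, hbD, hloop⟩ :=
    QRGame.exists_lt_map_eq (G.outcome v₀ σ) (G.devBoundTrunc v₀ d σ)
  obtain ⟨p, rfl⟩ : ∃ p, b = a + p := ⟨b - a, by omega⟩
  have hp : 0 < p := by omega
  set w := QRGame.lasso (G.outcome v₀ σ) a p
  have hw : ∀ t < a + p, w t = G.outcome v₀ σ t := fun t => QRGame.lasso_of_lt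
  have hwE : ∀ t, G.E (w t) (w (t + 1)) :=
    QRGame.lasso_edge hp hloop.symm fun t ht => QRGame.outcome_edge hstrat (by omega)
  have hcost : ∀ i, G.cost i w = G.costLT i (G.outcome v₀ σ) (d + 1) := fun i =>
    G.cost_lasso hp (by omega) fun h => (hM i h).trans_lt (by exact_mod_cast (by omega))
  have hfin : ∀ i, G.cost i w ≠ ⊤ → G.cost i w < G.devBoundTrunc v₀ d σ := fun i hi => by
    rw [hcost] at hi ⊢
    exact (hM i hi).trans_lt (by exact_mod_cast (by omega))
  refine ⟨G.lassoProfile v₀ σ w (G.devBoundTrunc v₀ d σ) (Γ + 2 * Fintype.card V),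
    QRGame.isProfile_lassoProfile hstrat (by omega) hwE,
    QRGame.isSecure_lassoProfile hstrat hsec hdev (fun t ht => hw t (by omega))
      (QRGame.exists_lasso_eq hp) hwE hcost hfin (by omega) (by omega) (by omega),
    fun i => G.finMem_lassoProfile hp (fun _ => QRGame.lasso_add_period) (by omega) i,
    fun i => by rw [QRGame.outcome_lassoProfile (v₀ := v₀) (hw 0 (by omega)), hcost]⟩

/-- Let `Γ = 2·|Π|·|V|` and `d = Γ + 3·|V|`.  If there exists a goal-optimal
and dev-optimal secure equilibrium in the truncated game `𝒯^d`, then there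
exists a finite-memory secure equilibrium in `(G, v₀)` with the same cost
profile. -/
theorem secure_equilibrium_from_truncated_same_costs
    {ι V : Type} [Fintype ι] [Fintype V] [DecidableEq ι]
    (G : QRGame ι V) (v₀ : V) (Γ d : ℕ)
    (hΓ : Γ = 2 * Fintype.card ι * Fintype.card V)
    (hd : d = Γ + 3 * Fintype.card V)
    (σ : ι → List V → V)
    (hstrat : ∀ i, G.IsStratTrunc v₀ d i (σ i))
    (hsec : G.IsSecureTrunc v₀ d σ)
    (hgoal : G.GoalOptTrunc v₀ d σ Γ) (hdev : G.DevOptTrunc v₀ d σ) :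
    ∃ τ : ι → List V → V, G.IsProfile v₀ τ ∧ G.IsSecure v₀ τ ∧
      (∀ i, QRGame.FinMem (τ i)) ∧
      ∀ i, G.cost i (G.outcome v₀ τ) = G.costLT i (G.outcome v₀ σ) (d + 1) :=
  secure_equilibrium_from_truncated_same_costs_general G v₀ Γ d hd σ hstrat hsec hgoal hdev
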